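/- Let (n_k)_{k≥1} be a sequence of integers with n_k ≥ 2, and suppose there exists 𝔯 ∈ ℕ such that for every k ≥ 0 there is some 1 ≤ J ≤ 𝔯+1 with n_{k+J} ≥ 3 (runs of the digit 2 have length at most 𝔯). Set Δ := 1/(2+𝔯). Then for every k ≥ 1: (i) ℓ_k(1)/ℓ_k(0) ≥ Δ; and (ii) for each i ∈ {0,1} with (n_{k+1}, i) ≠ (2,1): n_{k+1}−1−i ≤ p_{k+1}(i)/(1 − p_{k+1}(i)) ≤ (n_{k+1}−1−i)/Δ. -/

import Mathlib

/-- Block lengths `(ℓ_k(0), ℓ_k(1))` built from a digit sequence `(n_k)_{k≥1}`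
(`nseq k = n_k`): `ℓ_0 = (1,1)`, `ℓ_{k+1}(i) = (n_{k+1}−1−i) ℓ_k(0) + ℓ_k(1)`. -/
def ellSeq (nseq : ℕ → ℕ) : ℕ → ℕ × ℕ
  | 0 => (1, 1)
  | k+1 => ((nseq (k+1) - 1) * (ellSeq nseq k).1 + (ellSeq nseq k).2,
            (nseq (k+1) - 2) * (ellSeq nseq k).1 + (ellSeq nseq k).2)

/-- `ℓ_k(i)` for `i = 0, 1`. -/
def ellI (nseq : ℕ → ℕ) (k i : ℕ) : ℕ :=
  if i = 0 then (ellSeq nseq k).1 else (ellSeq nseq k).2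

/-- `p_{k+1}(i) = (n_{k+1} − 1 − i) ℓ_k(0) / ℓ_{k+1}(i)`. -/
noncomputable def pcoef (nseq : ℕ → ℕ) (k i : ℕ) : ℝ :=
  ((nseq (k+1) : ℝ) - 1 - (i : ℝ)) * ((ellSeq nseq k).1 : ℝ) / (ellI nseq (k+1) i : ℝ)


/- `ℓ_k(1) ≤ ℓ_k(0)`, and a digit `2` maps `(a, b)` to `(a + b, b)` while a digit `n ≥ 3`
gives `ℓ(0) ≤ 2 ℓ(1)`; so `ℓ_k(0) ≤ (2 + t) ℓ_k(1)` where `t ≤ 𝔯` is the length of the run of `2`s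
ending at `k`. Since `1 - p_{k+1}(i) = ℓ_k(1) / ℓ_{k+1}(i)`, the odds `p/(1-p)` equal
`(n_{k+1} - 1 - i) · ℓ_k(0) / ℓ_k(1)`, which the ratio bound pinches between the two sides. -/

namespace ellSeq

variable (nseq : ℕ → ℕ)

theorem one_le_snd (k : ℕ) : 1 ≤ (ellSeq nseq k).2 := by
  induction k with
  | zero => simp [ellSeq]
  | succ k ih => simp only [ellSeq]; omega

theorem snd_le_fst (k : ℕ) : (ellSeq nseq k).2 ≤ (ellSeq nseq k).1 := by
  induction k with
  | zero => simp [ellSeq]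
  | succ k ih =>
    simp only [ellSeq]
    have := Nat.mul_le_mul_right (ellSeq nseq k).1
      (Nat.sub_le_sub_left (by omega : 1 ≤ 2) (nseq (k+1)))
    omega

def twoRun : ℕ → ℕ
  | 0 => 0
  | k+1 => if nseq (k+1) = 2 then twoRun k + 1 else 0

theorem twoRun_le_self (k : ℕ) : twoRun nseq k ≤ k := by
  induction k with
  | zero => simp [twoRun]
  | succ k ih => simp only [twoRun]; split <;> omega

theorem eq_two_of_lt_twoRun {k j : ℕ} (hj : j < twoRun nseq k) : nseq (k - j) = 2 := by
  induction k generalizing j with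
  | zero => simp [twoRun] at hj
  | succ k ih =>
    simp only [twoRun] at hj
    split_ifs at hj with h
    · rcases j with _ | j
      · exact h
      · simpa using ih (j := j) (by omega)
    · omega

theorem twoRun_le {r : ℕ} (hr : ∀ k : ℕ, ∃ J : ℕ, 1 ≤ J ∧ J ≤ r + 1 ∧ 3 ≤ nseq (k + J))
    (k : ℕ) : twoRun nseq k ≤ r := by
  by_contra! h
  have hk : r + 1 ≤ k := h.trans_le (twoRun_le_self nseq k)
  obtain ⟨J, hJ1, hJr, hJ3⟩ := hr (k - (r + 1))
  have h2 := eq_two_of_lt_twoRun nseq (k := k) (j := r + 1 - J) (by omega)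
  rw [show k - (r + 1) + J = k - (r + 1 - J) by omega, h2] at hJ3
  omega

theorem fst_le_two_add_twoRun_mul_snd (k : ℕ) :
    (ellSeq nseq k).1 ≤ (2 + twoRun nseq k) * (ellSeq nseq k).2 := by
  induction k with
  | zero => simp [ellSeq, twoRun]
  | succ k ih =>
    simp only [ellSeq, twoRun]
    split_ifs with h
    · rw [h]
      simp only [Nat.add_one_sub_one, Nat.sub_self, one_mul, zero_mul, zero_add]
      linarith
    · -- for `n ≥ 3` use `n - 1 ≤ 2 (n - 2)`; for `n ≤ 1` both coefficients truncate to `0`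
      have := Nat.mul_le_mul_right (ellSeq nseq k).1
        (show nseq (k+1) - 1 ≤ 2 * (nseq (k+1) - 2) by omega)
      nlinarith

theorem inv_two_add_le_snd_div_fst {r : ℕ}
    (hr : ∀ k : ℕ, ∃ J : ℕ, 1 ≤ J ∧ J ≤ r + 1 ∧ 3 ≤ nseq (k + J)) (k : ℕ) :
    1 / (2 + (r : ℝ)) ≤ ((ellSeq nseq k).2 : ℝ) / (ellSeq nseq k).1 := by
  have hfst : (0 : ℝ) < (ellSeq nseq k).1 := by
    exact_mod_cast (one_le_snd nseq k).trans (snd_le_fst nseq k)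
  have hbound : ((ellSeq nseq k).1 : ℝ) ≤ (2 + r) * (ellSeq nseq k).2 := by
    have := (fst_le_two_add_twoRun_mul_snd nseq k).trans
      (Nat.mul_le_mul_right _ (Nat.add_le_add_left (twoRun_le nseq hr k) 2))
    exact_mod_cast this
  rw [div_le_div_iff₀ (by positivity) hfst]
  linarith

end ellSeq

theorem div_add_div_one_sub_div_add {K : Type*} [Field K] {x y : K} (h : x + y ≠ 0) :
    x / (x + y) / (1 - x / (x + y)) = x / y := by
  rw [one_sub_div h, add_sub_cancel_left, div_div_div_cancel_right₀ h]

theorem sub_one_sub_nonneg_of_add_one_le {n i : ℕ} (h : i + 1 ≤ n) : (0 : ℝ) ≤ n - 1 - i := by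
  have : ((i + 1 : ℕ) : ℝ) ≤ n := by exact_mod_cast h
  push_cast at this
  linarith

theorem pcoef_eq (nseq : ℕ → ℕ) {k i : ℕ} (hi : i ≤ 1) (hin : i + 1 ≤ nseq (k+1)) :
    pcoef nseq k i =
      ((nseq (k+1) : ℝ) - 1 - i) * (ellSeq nseq k).1 /
        (((nseq (k+1) : ℝ) - 1 - i) * (ellSeq nseq k).1 + (ellSeq nseq k).2) := by
  have hell :
      ellI nseq (k+1) i = (nseq (k+1) - 1 - i) * (ellSeq nseq k).1 + (ellSeq nseq k).2 := by
    interval_cases i <;> simp [ellI, ellSeq, Nat.sub_sub]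
  rw [pcoef, hell]
  push_cast [Nat.cast_sub (by omega : 1 + i ≤ nseq (k+1)), Nat.sub_sub]
  ring_nf

theorem pcoef_odds (nseq : ℕ → ℕ) {k i : ℕ} (hi : i ≤ 1) (hin : i + 1 ≤ nseq (k+1)) :
    pcoef nseq k i / (1 - pcoef nseq k i) =
      ((nseq (k+1) : ℝ) - 1 - i) / (((ellSeq nseq k).2 : ℝ) / (ellSeq nseq k).1) := by
  have hsnd : (0 : ℝ) < (ellSeq nseq k).2 := by exact_mod_cast ellSeq.one_le_snd nseq k
  have hc := sub_one_sub_nonneg_of_add_one_le hin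
  rw [pcoef_eq nseq hi hin, div_add_div_one_sub_div_add (by positivity), div_div_eq_mul_div]

theorem bad_sublemma
    (nseq : ℕ → ℕ) (hn : ∀ k, 1 ≤ k → 2 ≤ nseq k)
    (r : ℕ) (hr : ∀ k : ℕ, ∃ J : ℕ, 1 ≤ J ∧ J ≤ r + 1 ∧ 3 ≤ nseq (k + J)) :
    ∀ k, 1 ≤ k →
      (1 / (2 + (r : ℝ)) ≤ ((ellSeq nseq k).2 : ℝ) / ((ellSeq nseq k).1 : ℝ)) ∧
      ∀ i : ℕ, i ≤ 1 → ¬(nseq (k+1) = 2 ∧ i = 1) →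
        ((nseq (k+1) : ℝ) - 1 - (i : ℝ)) ≤
            pcoef nseq k i / (1 - pcoef nseq k i) ∧
          pcoef nseq k i / (1 - pcoef nseq k i) ≤
            ((nseq (k+1) : ℝ) - 1 - (i : ℝ)) / (1 / (2 + (r : ℝ))) := by
  intro k _
  have hratio := ellSeq.inv_two_add_le_snd_div_fst nseq hr k
  refine ⟨hratio, fun i hi _ => ?_⟩
  have hin : i + 1 ≤ nseq (k+1) := by have := hn (k+1) (by omega); omega
  have hc := sub_one_sub_nonneg_of_add_one_le hin
  have hratio_le_one : ((ellSeq nseq k).2 : ℝ) / (ellSeq nseq k).1 ≤ 1 :=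
    div_le_one_of_le₀ (by exact_mod_cast ellSeq.snd_le_fst nseq k) (by positivity)
  rw [pcoef_odds nseq hi hin]
  constructor
  · simpa using div_le_div_of_nonneg_left hc (hratio.trans_lt' (by positivity)) hratio_le_one
  · exact div_le_div_of_nonneg_left hc (by positivity) hratio
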